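/- Closed form of the KL divergence between two Dirichlet distributions. Fix K ≥ 2 and α, γ : Fin K → ℝ with α_k > 0 and γ_k > 0 for all k, and set α₀ = ∑_k α_k. Then ∫_S (f_α(x)/B(α)) · log( (f_α(x)/B(α)) / (f_γ(x)/B(γ)) ) dx = log(B(γ)/B(α)) + ∑_{k ∈ Fin K} (α_k − γ_k)(ψ(α_k) − ψ(α₀)); that is, KL(Dir(α) ‖ Dir(γ)) = log(B(γ)/B(α)) + ∑_k (α_k − γ_k)(ψ(α_k) − ψ(α₀)). -/

import Mathlib

open MeasureTheory Real
open scoped ENNReal NNReal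

/-- The open simplex `S = {x ∈ ℝ^{K-1} | ∀ i, 0 < xᵢ ∧ ∑ i, xᵢ < 1}`. -/
def openSimplex (K : ℕ) : Set (Fin (K - 1) → ℝ) :=
  {x | (∀ i, 0 < x i) ∧ ∑ i, x i < 1}

/-- The `k`-th barycentric coordinate: `X_k(x) = x_k` for `k < K-1`, and
`X_{K-1}(x) = 1 - ∑ i, x_i`. -/
noncomputable def bary (K : ℕ) (k : Fin K) (x : Fin (K - 1) → ℝ) : ℝ :=
  if h : (k : ℕ) < K - 1 then x ⟨k, h⟩ else 1 - ∑ i, x i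

/-- The unnormalized Dirichlet density `f_α(x) = ∏ k, X_k(x)^(α k - 1)`
(real powers). -/
noncomputable def dirichletDensity {K : ℕ} (α : Fin K → ℝ) (x : Fin (K - 1) → ℝ) : ℝ :=
  ∏ k, (bary K k x) ^ (α k - 1)

/-- The multivariate Beta function `B(α) = (∏ k, Γ(α k)) / Γ(∑ k, α k)`. -/
noncomputable def multiBeta {K : ℕ} (α : Fin K → ℝ) : ℝ :=
  (∏ k, Real.Gamma (α k)) / Real.Gamma (∑ k, α k)

/-- The digamma function `ψ(t)`: the derivative at `t` of `log ∘ Γ`. -/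
noncomputable def digamma (t : ℝ) : ℝ :=
  deriv (fun s => Real.log (Real.Gamma s)) t

/-!
On the simplex the log-ratio of the two densities is `log (B(γ)/B(α)) + ∑ₖ (αₖ - γₖ) log Xₖ`, so
the divergence reduces to the normalisation `∫_S f_α = B(α)` and to the log-moments
`∫_S f_α log Xₖ`. The normalisation follows by induction on `K`: on the slice where the first
coordinate equals `t`, the substitution `x = (t, (1 - t) z)` with `z` in the lower-dimensional
simplex factors the integral into a one-dimensional Beta integral in `t` times the normalisation
for the remaining parameters. Since `f_α · Xₖ^s = f_{α + s eₖ}`, the function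
`s ↦ ∫_S f_α Xₖ^s = B(α + s eₖ)` can be differentiated under the integral sign at `s = 0`,
which gives `∫_S f_α log Xₖ = B(α) (ψ(αₖ) - ψ(α₀))`.
-/
open Set

theorem measurableSet_openSimplex (K : ℕ) : MeasurableSet (openSimplex K) := by
  simp only [openSimplex, ofPred_and, ofPred_forall]
  exact (MeasurableSet.iInter fun i =>
    measurableSet_lt measurable_const (measurable_pi_apply i)).inter
      (measurableSet_lt (by fun_prop) measurable_const)

@[fun_prop]
theorem measurable_bary (K : ℕ) (k : Fin K) : Measurable (bary K k) := by
  unfold bary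
  split <;> fun_prop

@[fun_prop]
theorem measurable_dirichletDensity {K : ℕ} (α : Fin K → ℝ) : Measurable (dirichletDensity α) :=
  Finset.measurable_prod _ fun k _ => (measurable_bary K k).pow_const _

section

variable {K : ℕ} {x : Fin (K - 1) → ℝ}

theorem bary_pos (k : Fin K) (hx : x ∈ openSimplex K) : 0 < bary K k x := by
  unfold bary
  split
  · exact hx.1 _
  · linarith [hx.2]

theorem bary_le_one (k : Fin K) (hx : x ∈ openSimplex K) : bary K k x ≤ 1 := by
  have hx_nonneg : ∀ i, 0 ≤ x i := fun i => (hx.1 i).le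
  unfold bary
  split
  · rename_i hk
    linarith [hx.2, Finset.single_le_sum (fun i _ => hx_nonneg i) (Finset.mem_univ ⟨k, hk⟩)]
  · linarith [Finset.sum_nonneg fun i (_ : i ∈ Finset.univ) => hx_nonneg i]

theorem dirichletDensity_pos (α : Fin K → ℝ) (hx : x ∈ openSimplex K) :
    0 < dirichletDensity α x :=
  Finset.prod_pos fun k _ => rpow_pos_of_pos (bary_pos k hx) _

theorem log_dirichletDensity (α : Fin K → ℝ) (hx : x ∈ openSimplex K) :
    log (dirichletDensity α x) = ∑ k, (α k - 1) * log (bary K k x) := by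
  rw [dirichletDensity, log_prod fun k _ => (rpow_pos_of_pos (bary_pos k hx) _).ne']
  exact Finset.sum_congr rfl fun k _ => log_rpow (bary_pos k hx) _

theorem dirichletDensity_update (α : Fin K → ℝ) (k : Fin K) (c : ℝ) (hx : x ∈ openSimplex K) :
    dirichletDensity (Function.update α k c) x = dirichletDensity α x * bary K k x ^ (c - α k) := by
  simp only [dirichletDensity]
  rw [← Finset.mul_prod_erase _ _ (Finset.mem_univ k),
    ← Finset.mul_prod_erase _ _ (Finset.mem_univ k), Function.update_self,
    Finset.prod_congr rfl fun j hj => by rw [Function.update_of_ne (Finset.ne_of_mem_erase hj)],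
    show c - 1 = (α k - 1) + (c - α k) by ring, rpow_add (bary_pos k hx)]
  ring

end

theorem multiBeta_pos {n : ℕ} {α : Fin (n + 1) → ℝ} (hα : ∀ k, 0 < α k) : 0 < multiBeta α :=
  div_pos (Finset.prod_pos fun k _ => Gamma_pos_of_pos (hα k))
    (Gamma_pos_of_pos (Finset.sum_pos (fun k _ => hα k) Finset.univ_nonempty))

theorem lintegral_comp_smul_of_pos {E : Type*} [NormedAddCommGroup E] [NormedSpace ℝ E]
    [MeasurableSpace E] [BorelSpace E] [FiniteDimensional ℝ E] (μ : Measure E)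
    [μ.IsAddHaarMeasure] (f : E → ℝ≥0∞) {c : ℝ} (hc : 0 < c) :
    ∫⁻ x, f x ∂μ = ENNReal.ofReal (c ^ Module.finrank ℝ E) * ∫⁻ x, f (c • x) ∂μ := by
  have h := lintegral_map_equiv f (MeasurableEquiv.smul₀ c hc.ne') (μ := μ)
  rw [show ⇑(MeasurableEquiv.smul₀ c hc.ne' : E ≃ᵐ E) = (c • ·) from rfl,
    Measure.map_addHaar_smul μ hc.ne', lintegral_smul_measure] at h
  rw [← h, smul_eq_mul, ← mul_assoc, ← ENNReal.ofReal_mul (by positivity),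
    abs_of_pos (by positivity), mul_inv_cancel₀ (by positivity), ENNReal.ofReal_one, one_mul]

theorem lintegral_fin_cons {α : Type*} [MeasureSpace α] [SigmaFinite (volume : Measure α)] {n : ℕ}
    {F : (Fin (n + 1) → α) → ℝ≥0∞} (hF : Measurable F) :
    ∫⁻ x, F x = ∫⁻ t, ∫⁻ y, F (Fin.cons t y) := by
  let e := (MeasurableEquiv.piFinSuccAbove (fun _ : Fin (n + 1) => α) 0).symm
  rw [← (volume_preserving_piFinSuccAbove (fun _ => α) 0).symm.lintegral_comp_emb
      e.measurableEmbedding, Measure.volume_eq_prod,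
    lintegral_prod (fun p => F (e p)) (hF.comp e.measurable).aemeasurable]
  simp only [e, MeasurableEquiv.piFinSuccAbove_symm_apply, Fin.insertNthEquiv, Equiv.coe_fn_mk,
    Fin.insertNth_zero']

theorem lintegral_Ioo_rpow_mul_one_sub_rpow {a b : ℝ} (ha : 0 < a) (hb : 0 < b) :
    ∫⁻ t in Ioo (0 : ℝ) 1, ENNReal.ofReal (t ^ (a - 1) * (1 - t) ^ (b - 1)) =
      ENNReal.ofReal (ProbabilityTheory.beta a b) := by
  have hβ := ProbabilityTheory.beta_pos ha hb
  have h := ProbabilityTheory.lintegral_betaPDF_eq_one ha hb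
  simp_rw [ProbabilityTheory.lintegral_betaPDF, mul_assoc,
    ENNReal.ofReal_mul (one_div_pos.2 hβ).le] at h
  rw [lintegral_const_mul' _ _ ENNReal.ofReal_ne_top] at h
  rw [← mul_one (ENNReal.ofReal _), ← h, ← mul_assoc, ← ENNReal.ofReal_mul hβ.le,
    mul_one_div_cancel hβ.ne', ENNReal.ofReal_one, one_mul]

theorem multiBeta_eq_beta_mul_multiBeta_tail {n : ℕ} {α : Fin (n + 2) → ℝ}
    (hα : ∀ k, 0 < α k) :
    multiBeta α =
      ProbabilityTheory.beta (α 0) (∑ j : Fin (n + 1), α j.succ) * multiBeta (Fin.tail α) := by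
  have hrest : Gamma (∑ j : Fin (n + 1), α j.succ) ≠ 0 :=
    (Gamma_pos_of_pos (Finset.sum_pos (fun j _ => hα j.succ) Finset.univ_nonempty)).ne'
  rw [multiBeta, multiBeta, ProbabilityTheory.beta, Fin.prod_univ_succ, Fin.sum_univ_succ]
  simp only [Fin.tail]
  field_simp

theorem cons_mem_openSimplex_iff {n : ℕ} {t : ℝ} {w : Fin n → ℝ} :
    (Fin.cons t w : Fin (n + 1) → ℝ) ∈ openSimplex (n + 2) ↔
      0 < t ∧ (∀ j, 0 < w j) ∧ t + ∑ j, w j < 1 := by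
  simp [openSimplex, Fin.forall_fin_succ, Fin.sum_cons, and_assoc]

theorem mem_Ioo_of_cons_mem_openSimplex {n : ℕ} {t : ℝ} {w : Fin n → ℝ}
    (h : (Fin.cons t w : Fin (n + 1) → ℝ) ∈ openSimplex (n + 2)) : t ∈ Ioo 0 1 := by
  obtain ⟨ht, hw, hsum⟩ := cons_mem_openSimplex_iff.1 h
  exact ⟨ht, by linarith [Finset.sum_nonneg fun j (_ : j ∈ Finset.univ) => (hw j).le]⟩

theorem cons_smul_mem_openSimplex_iff {n : ℕ} {t : ℝ} (ht : t ∈ Ioo 0 1) {z : Fin n → ℝ} :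
    (Fin.cons t ((1 - t) • z) : Fin (n + 1) → ℝ) ∈ openSimplex (n + 2) ↔
      z ∈ openSimplex (n + 1) := by
  have hc : 0 < 1 - t := sub_pos.2 ht.2
  simp only [cons_mem_openSimplex_iff, Pi.smul_apply, smul_eq_mul, ← Finset.mul_sum,
    mul_pos_iff_of_pos_left hc, ht.1, true_and]
  refine and_congr_right fun _ => ?_
  show _ ↔ ∑ j : Fin n, z j < 1
  constructor <;> intro h <;> nlinarith

theorem bary_castSucc {n : ℕ} (i : Fin n) (x : Fin n → ℝ) : bary (n + 1) i.castSucc x = x i := by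
  simp [bary]

theorem bary_last {n : ℕ} (x : Fin n → ℝ) : bary (n + 1) (Fin.last n) x = 1 - ∑ i, x i := by
  simp [bary]

theorem bary_succ_cons_smul {n : ℕ} (t : ℝ) (z : Fin n → ℝ) (j : Fin (n + 1)) :
    bary (n + 2) j.succ (Fin.cons t ((1 - t) • z)) = (1 - t) * bary (n + 1) j z := by
  induction j using Fin.lastCases with
  | last =>
    simp only [Fin.succ_last, bary_last, Fin.sum_cons, Pi.smul_apply, smul_eq_mul,
      ← Finset.mul_sum]
    ring
  | cast i =>
    rw [← Fin.castSucc_succ, bary_castSucc, bary_castSucc, Fin.cons_succ, Pi.smul_apply,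
      smul_eq_mul]

theorem one_sub_pow_mul_dirichletDensity_cons {n : ℕ} (α : Fin (n + 2) → ℝ) {t : ℝ}
    (ht : t < 1) {z : Fin n → ℝ} (hz : z ∈ openSimplex (n + 1)) :
    (1 - t) ^ n * dirichletDensity α (Fin.cons t ((1 - t) • z)) =
      t ^ (α 0 - 1) * (1 - t) ^ (∑ j : Fin (n + 1), α j.succ - 1) *
        dirichletDensity (Fin.tail α) z := by
  have hc : 0 < 1 - t := sub_pos.2 ht
  have hbary0 : bary (n + 2) 0 (Fin.cons t ((1 - t) • z)) = t := bary_castSucc 0 _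
  have hexp : (n : ℝ) + ∑ j : Fin (n + 1), (α j.succ - 1) = ∑ j : Fin (n + 1), α j.succ - 1 := by
    simp only [Finset.sum_sub_distrib, Finset.sum_const, Finset.card_univ, Fintype.card_fin,
      nsmul_eq_mul, Nat.cast_add, Nat.cast_one, mul_one]
    ring
  simp only [dirichletDensity]
  rw [Fin.prod_univ_succ, hbary0]
  simp only [bary_succ_cons_smul, mul_rpow hc.le (bary_pos _ hz).le, Finset.prod_mul_distrib,
    ← rpow_sum_of_pos hc, Fin.tail]
  rw [← rpow_natCast, ← hexp, rpow_add hc]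
  ring

theorem lintegral_indicator_dirichletDensity_cons {n : ℕ} (α : Fin (n + 2) → ℝ) (t : ℝ) :
    ∫⁻ y, (openSimplex (n + 2)).indicator (fun x => ENNReal.ofReal (dirichletDensity α x))
        (Fin.cons t y) =
      (Ioo 0 1).indicator (fun t => ENNReal.ofReal (t ^ (α 0 - 1) *
          (1 - t) ^ (∑ j : Fin (n + 1), α j.succ - 1))) t *
        ∫⁻ z in openSimplex (n + 1), ENNReal.ofReal (dirichletDensity (Fin.tail α) z) := by
  by_cases ht : t ∈ Ioo 0 1
  · have hc : 0 < 1 - t := sub_pos.2 ht.2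
    rw [indicator_of_mem ht, lintegral_comp_smul_of_pos volume _ hc,
      Module.finrank_fin_fun, ← lintegral_const_mul' _ _ ENNReal.ofReal_ne_top,
      ← lintegral_const_mul' _ _ ENNReal.ofReal_ne_top,
      ← lintegral_indicator (measurableSet_openSimplex _)]
    refine lintegral_congr fun z => ?_
    by_cases hz : z ∈ openSimplex (n + 1)
    · rw [indicator_of_mem ((cons_smul_mem_openSimplex_iff ht).2 hz), indicator_of_mem hz,
        ← ENNReal.ofReal_mul (pow_nonneg hc.le n),
        ← ENNReal.ofReal_mul (mul_nonneg (rpow_nonneg ht.1.le _) (rpow_nonneg hc.le _)),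
        one_sub_pow_mul_dirichletDensity_cons α ht.2 hz]
    · rw [indicator_of_notMem (mt (cons_smul_mem_openSimplex_iff ht).1 hz),
        indicator_of_notMem hz, mul_zero]
  · rw [indicator_of_notMem ht, zero_mul]
    simp_rw [indicator_of_notMem fun h => ht (mem_Ioo_of_cons_mem_openSimplex h), lintegral_zero]

theorem lintegral_dirichletDensity {n : ℕ} {α : Fin (n + 1) → ℝ} (hα : ∀ k, 0 < α k) :
    ∫⁻ x in openSimplex (n + 1), ENNReal.ofReal (dirichletDensity α x) =
      ENNReal.ofReal (multiBeta α) := by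
  induction n with
  | zero =>
    have hS : openSimplex 1 = univ := eq_univ_of_forall fun x => ⟨finZeroElim, by simp⟩
    simp [hS, dirichletDensity, bary, multiBeta, (Gamma_pos_of_pos (hα 0)).ne', volume_pi]
  | succ n ih =>
    rw [← lintegral_indicator (measurableSet_openSimplex _)]
    refine (lintegral_fin_cons ((measurable_dirichletDensity α).ennreal_ofReal.indicator
        (measurableSet_openSimplex _))).trans ?_
    have hb : 0 < ∑ j : Fin (n + 1), α j.succ :=
      Finset.sum_pos (fun j _ => hα j.succ) Finset.univ_nonempty
    simp_rw [lintegral_indicator_dirichletDensity_cons, ih (α := Fin.tail α) fun j => hα j.succ]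
    rw [lintegral_mul_const' _ _ ENNReal.ofReal_ne_top, lintegral_indicator measurableSet_Ioo,
      lintegral_Ioo_rpow_mul_one_sub_rpow (hα 0) hb, multiBeta_eq_beta_mul_multiBeta_tail hα,
      ENNReal.ofReal_mul (ProbabilityTheory.beta_pos (hα 0) hb).le]

theorem dirichletDensity_nonneg_ae {K : ℕ} (α : Fin K → ℝ) :
    0 ≤ᵐ[volume.restrict (openSimplex K)] dirichletDensity α :=
  ae_restrict_of_forall_mem (measurableSet_openSimplex K) fun _ hx => (dirichletDensity_pos α hx).le

theorem integrableOn_dirichletDensity {n : ℕ} {α : Fin (n + 1) → ℝ} (hα : ∀ k, 0 < α k) :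
    IntegrableOn (dirichletDensity α) (openSimplex (n + 1)) := by
  refine (lintegral_ofReal_ne_top_iff_integrable
    (measurable_dirichletDensity α).aestronglyMeasurable (dirichletDensity_nonneg_ae α)).1 ?_
  rw [lintegral_dirichletDensity hα]
  exact ENNReal.ofReal_ne_top

theorem integral_dirichletDensity {n : ℕ} {α : Fin (n + 1) → ℝ} (hα : ∀ k, 0 < α k) :
    ∫ x in openSimplex (n + 1), dirichletDensity α x = multiBeta α := by
  rw [integral_eq_lintegral_of_nonneg_ae (dirichletDensity_nonneg_ae α)
      (measurable_dirichletDensity α).aestronglyMeasurable,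
    lintegral_dirichletDensity hα, ENNReal.toReal_ofReal (multiBeta_pos hα).le]

theorem update_pos {ι : Type*} [DecidableEq ι] {α : ι → ℝ} (hα : ∀ j, 0 < α j) {k : ι} {c : ℝ}
    (hc : 0 < c) (j : ι) : 0 < Function.update α k c j := by
  rcases eq_or_ne j k with rfl | hne
  · rwa [Function.update_self]
  · rw [Function.update_of_ne hne]; exact hα j

theorem integral_dirichletDensity_mul_rpow_bary {n : ℕ} {α : Fin (n + 1) → ℝ}
    (hα : ∀ k, 0 < α k) (k : Fin (n + 1)) {s : ℝ} (hs : -α k < s) :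
    ∫ x in openSimplex (n + 1), dirichletDensity α x * bary (n + 1) k x ^ s =
      multiBeta (Function.update α k (α k + s)) := by
  rw [← integral_dirichletDensity (update_pos hα (by linarith : 0 < α k + s))]
  refine setIntegral_congr_fun (measurableSet_openSimplex _) fun x hx => ?_
  rw [dirichletDensity_update α k _ hx, add_sub_cancel_left]

theorem hasDerivAt_Gamma_mul_digamma {t : ℝ} (ht : 0 < t) :
    HasDerivAt Gamma (Gamma t * digamma t) t := by
  have hG :=
    (differentiableAt_Gamma fun m => by linarith [(m.cast_nonneg : (0 : ℝ) ≤ m)]).hasDerivAt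
  have hψ : digamma t = deriv Gamma t / Gamma t := (hG.log (Gamma_pos_of_pos ht).ne').deriv
  rwa [hψ, mul_div_cancel₀ _ (Gamma_pos_of_pos ht).ne']

theorem multiBeta_update_add {n : ℕ} (α : Fin (n + 1) → ℝ) (k : Fin (n + 1)) (s : ℝ) :
    multiBeta (Function.update α k (α k + s)) =
      Gamma (α k + s) * (∏ j ∈ Finset.univ.erase k, Gamma (α j)) / Gamma (∑ j, α j + s) := by
  rw [multiBeta, ← Finset.mul_prod_erase _ _ (Finset.mem_univ k), Function.update_self,
    Finset.sum_update_of_mem (Finset.mem_univ k), Finset.prod_congr rfl fun j hj => by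
      rw [Function.update_of_ne (Finset.ne_of_mem_erase hj)],
    ← Finset.add_sum_erase _ _ (Finset.mem_univ k), Finset.sdiff_singleton_eq_erase, add_right_comm]

theorem hasDerivAt_multiBeta_update {n : ℕ} {α : Fin (n + 1) → ℝ} (hα : ∀ k, 0 < α k)
    (k : Fin (n + 1)) :
    HasDerivAt (fun s => multiBeta (Function.update α k (α k + s)))
      (multiBeta α * (digamma (α k) - digamma (∑ j, α j))) 0 := by
  have hα₀ : 0 < ∑ j, α j := Finset.sum_pos (fun j _ => hα j) Finset.univ_nonempty
  have hnum := (HasDerivAt.comp_const_add (α k) 0 (by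
    rw [add_zero]; exact hasDerivAt_Gamma_mul_digamma (hα k))).mul_const
    (∏ j ∈ Finset.univ.erase k, Gamma (α j))
  have hden := HasDerivAt.comp_const_add (∑ j, α j) 0 (by
    rw [add_zero]; exact hasDerivAt_Gamma_mul_digamma hα₀)
  simp_rw [multiBeta_update_add]
  refine (hnum.div hden (by simpa using (Gamma_pos_of_pos hα₀).ne')).congr_deriv ?_
  simp only [add_zero]
  rw [multiBeta, ← Finset.mul_prod_erase _ _ (Finset.mem_univ k)]
  field_simp

theorem rpow_mul_abs_log_le {X s ε : ℝ} (hX : 0 < X) (hX1 : X ≤ 1) (hs : |s| < ε) :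
    X ^ s * |log X| ≤ ε⁻¹ * X ^ (-2 * ε) := by
  have hε : 0 < ε := (abs_nonneg s).trans_lt hs
  have hpos : ε < s + 2 * ε := by linarith [neg_abs_le s]
  have hlog := abs_log_mul_self_rpow_lt X (s + 2 * ε) hX hX1 (hε.trans hpos)
  rw [abs_mul, abs_of_pos (rpow_pos_of_pos hX _)] at hlog
  calc X ^ s * |log X| = X ^ (-2 * ε) * (|log X| * X ^ (s + 2 * ε)) := by
        rw [mul_left_comm, ← rpow_add hX, show -2 * ε + (s + 2 * ε) = s by ring, mul_comm]
    _ ≤ X ^ (-2 * ε) * ε⁻¹ := by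
        gcongr
        exact hlog.le.trans (by rw [one_div]; exact inv_anti₀ hε hpos.le)
    _ = ε⁻¹ * X ^ (-2 * ε) := mul_comm _ _

theorem norm_dirichletDensity_mul_rpow_mul_log_le {K : ℕ} {x : Fin (K - 1) → ℝ}
    (hx : x ∈ openSimplex K) (α : Fin K → ℝ) (k : Fin K) {s ε : ℝ} (hs : |s| < ε) :
    ‖dirichletDensity α x * (bary K k x ^ s * log (bary K k x))‖ ≤
      ε⁻¹ * dirichletDensity (Function.update α k (α k - 2 * ε)) x := by
  have hX := bary_pos k hx
  rw [dirichletDensity_update α k _ hx, norm_mul, norm_mul,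
    norm_of_nonneg (dirichletDensity_pos α hx).le, norm_of_nonneg (rpow_pos_of_pos hX _).le,
    norm_eq_abs, show α k - 2 * ε - α k = -2 * ε by ring]
  exact (mul_le_mul_of_nonneg_left (rpow_mul_abs_log_le hX (bary_le_one k hx) hs)
    (dirichletDensity_pos α hx).le).trans_eq (by ring)

theorem integral_dirichletDensity_mul_log_bary {n : ℕ} {α : Fin (n + 1) → ℝ}
    (hα : ∀ k, 0 < α k) (k : Fin (n + 1)) :
    IntegrableOn (fun x => dirichletDensity α x * log (bary (n + 1) k x)) (openSimplex (n + 1)) ∧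
      ∫ x in openSimplex (n + 1), dirichletDensity α x * log (bary (n + 1) k x) =
        multiBeta α * (digamma (α k) - digamma (∑ j, α j)) := by
  obtain ⟨ε, hε, h2ε⟩ : ∃ ε, 0 < ε ∧ 2 * ε < α k :=
    ⟨α k / 4, by linarith [hα k], by linarith [hα k]⟩
  obtain ⟨hint, hderiv⟩ := hasDerivAt_integral_of_dominated_loc_of_deriv_le
    (F := fun s x => dirichletDensity α x * bary (n + 1) k x ^ s)
    (F' := fun s x => dirichletDensity α x * (bary (n + 1) k x ^ s * log (bary (n + 1) k x)))
    (Metric.ball_mem_nhds 0 hε)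
    (Filter.Eventually.of_forall fun s => by fun_prop)
    (by simpa only [rpow_zero, mul_one] using (integrableOn_dirichletDensity hα).integrable)
    (by fun_prop)
    (ae_restrict_of_forall_mem (measurableSet_openSimplex _) fun x hx s hs =>
      norm_dirichletDensity_mul_rpow_mul_log_le hx α k (by simpa using hs))
    ((integrableOn_dirichletDensity (update_pos hα (by linarith : 0 < α k - 2 * ε))).const_mul ε⁻¹)
    (ae_restrict_of_forall_mem (measurableSet_openSimplex _) fun x hx s _ =>
      ((hasStrictDerivAt_const_rpow (bary_pos k hx) s).hasDerivAt.const_mul _))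
  simp only [rpow_zero, one_mul] at hint hderiv
  refine ⟨hint, hderiv.unique ((hasDerivAt_multiBeta_update hα k).congr_of_eventuallyEq ?_)⟩
  filter_upwards [Metric.ball_mem_nhds 0 (hα k)] with s hs
  rw [Metric.mem_ball, dist_zero_right, norm_eq_abs] at hs
  exact integral_dirichletDensity_mul_rpow_bary hα k (neg_lt_of_abs_lt hs)

theorem log_dirichletDensity_div {K : ℕ} {x : Fin (K - 1) → ℝ} (hx : x ∈ openSimplex K)
    (α γ : Fin K → ℝ) {Bα Bγ : ℝ} (hBα : 0 < Bα) (hBγ : 0 < Bγ) :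
    log ((dirichletDensity α x / Bα) / (dirichletDensity γ x / Bγ)) =
      log (Bγ / Bα) + ∑ k, (α k - γ k) * log (bary K k x) := by
  have hfα := dirichletDensity_pos α hx
  have hfγ := dirichletDensity_pos γ hx
  rw [log_div (by positivity) (by positivity), log_div hfα.ne' hBα.ne', log_div hfγ.ne' hBγ.ne',
    log_div hBγ.ne' hBα.ne', log_dirichletDensity α hx, log_dirichletDensity γ hx]
  simp only [sub_mul, Finset.sum_sub_distrib]
  ring

/-- **Closed form of the KL divergence between two Dirichlet distributions.**
For `K ≥ 2` and `α, γ` with positive entries, with `α₀ = ∑ k, α k`,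
`KL(Dir(α)‖Dir(γ)) = log(B(γ)/B(α)) + ∑ k, (α_k − γ_k)(ψ(α_k) − ψ(α₀))`. -/
theorem klDiv_dirichlet
    (K : ℕ) (hK : 2 ≤ K) (α γ : Fin K → ℝ)
    (hα : ∀ k, 0 < α k) (hγ : ∀ k, 0 < γ k) :
    ∫ x in openSimplex K,
        (dirichletDensity α x / multiBeta α) *
          Real.log ((dirichletDensity α x / multiBeta α) /
            (dirichletDensity γ x / multiBeta γ)) =
      Real.log (multiBeta γ / multiBeta α) +
        ∑ k, (α k - γ k) * (digamma (α k) - digamma (∑ j, α j)) := by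
  obtain ⟨n, rfl⟩ : ∃ n, K = n + 1 := ⟨K - 1, by omega⟩
  have hBα := multiBeta_pos hα
  have hmoment := integral_dirichletDensity_mul_log_bary hα
  have hint k := (hmoment k).1.const_mul (α k - γ k)
  have hintegrand : EqOn
      (fun x => (dirichletDensity α x / multiBeta α) *
        log ((dirichletDensity α x / multiBeta α) / (dirichletDensity γ x / multiBeta γ)))
      (fun x => (multiBeta α)⁻¹ * (log (multiBeta γ / multiBeta α) * dirichletDensity α x +
        ∑ k, (α k - γ k) * (dirichletDensity α x * log (bary (n + 1) k x))))
      (openSimplex (n + 1)) := fun x hx => by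
    dsimp only
    rw [log_dirichletDensity_div hx α γ hBα (multiBeta_pos hγ), mul_add, mul_add, Finset.mul_sum,
      Finset.mul_sum]
    congr 1
    · ring
    · exact Finset.sum_congr rfl fun _ _ => by ring
  rw [setIntegral_congr_fun (measurableSet_openSimplex _) hintegrand, integral_const_mul,
    integral_add ((integrableOn_dirichletDensity hα).const_mul _)
      (integrable_finsetSum _ fun k _ => hint k),
    integral_const_mul, integral_dirichletDensity hα, integral_finsetSum _ fun k _ => hint k]
  simp only [integral_const_mul, (hmoment _).2, mul_left_comm _ (multiBeta α), ← Finset.mul_sum]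
  field_simp
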